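/- Let s ∈ [−1,1]^n, δ > 0, z = (I + L)^{−1} s, and let q ∈ ℝ^n satisfy ‖q − z‖_{I+L} ≤ δ·‖z‖_{I+L}. Then |√(qᵀ L⁺ q) − √(zᵀ L⁺ z)| ≤ √2·δ·n and |√(qᵀ L⁻ q) − √(zᵀ L⁻ z)| ≤ √2·δ·n. -/

import Mathlib

open Matrix

/-- The norm of a vector `x` with respect to a matrix `K`: `‖x‖_K = √(xᵀ K x)`. -/
noncomputable def matNorm {m : Type*} [Fintype m] (K : Matrix m m ℝ) (x : m → ℝ) : ℝ :=
  Real.sqrt (x ⬝ᵥ K *ᵥ x)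

/-!
For positive semidefinite `K`, `‖x‖_K` is the Euclidean norm of `B x` where `K = Bᵀ B`, so it
obeys the reverse triangle inequality, and `‖·‖_K ≤ ‖·‖_M` whenever `M - K` is positive
semidefinite. Both `L⁺` and `L⁻` have the form `diag(∑ⱼ |Wᵢⱼ|) - W` with `W` symmetric, hence are
positive semidefinite, and they add up to `L`; thus `I + L - L^±` is positive semidefinite and
`|‖q‖_{L^±} - ‖z‖_{L^±}| ≤ ‖q - z‖_{I+L} ≤ δ ‖z‖_{I+L}`. Finally
`‖z‖²_{I+L} = zᵀ s ≤ |z| |s| ≤ ‖z‖_{I+L} |s|`, so `‖z‖_{I+L} ≤ |s| ≤ √2 n`.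
-/

section

variable {ι : Type*} [Fintype ι]

lemma matNorm_conjTranspose_mul_self (B : Matrix ι ι ℝ) (x : ι → ℝ) :
    matNorm (Bᴴ * B) x = ‖WithLp.toLp 2 (B *ᵥ x)‖ := by
  rw [matNorm, EuclideanSpace.norm_eq, ← mulVec_mulVec, dotProduct_mulVec, vecMul_conjTranspose]
  simp [dotProduct, sq]

open scoped MatrixOrder in
lemma abs_matNorm_sub_matNorm_le {K : Matrix ι ι ℝ} (hK : K.PosSemidef) (x y : ι → ℝ) :
    |matNorm K x - matNorm K y| ≤ matNorm K (x - y) := by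
  classical
  obtain ⟨B, rfl⟩ := CStarAlgebra.nonneg_iff_eq_star_mul_self.mp hK.nonneg
  simpa only [star_eq_conjTranspose, matNorm_conjTranspose_mul_self, mulVec_sub, WithLp.toLp_sub]
    using abs_norm_sub_norm_le _ _

lemma matNorm_le_matNorm {M N : Matrix ι ι ℝ} (h : (N - M).PosSemidef) (x : ι → ℝ) :
    matNorm M x ≤ matNorm N x := by
  refine Real.sqrt_le_sqrt ?_
  have := h.dotProduct_mulVec_nonneg x
  rw [star_trivial, sub_mulVec, dotProduct_sub, sub_nonneg] at this
  exact this

lemma abs_matNorm_sub_matNorm_le_of_le {K M : Matrix ι ι ℝ} (hK : K.PosSemidef)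
    (hKM : (M - K).PosSemidef) (x y : ι → ℝ) :
    |matNorm K x - matNorm K y| ≤ matNorm M (x - y) :=
  (abs_matNorm_sub_matNorm_le hK x y).trans (matNorm_le_matNorm hKM _)

lemma matNorm_one_add_inv_mulVec_le [DecidableEq ι] {K : Matrix ι ι ℝ} (hK : K.PosSemidef)
    (s : ι → ℝ) : matNorm (1 + K) ((1 + K)⁻¹ *ᵥ s) ≤ √(s ⬝ᵥ s) := by
  set z := (1 + K)⁻¹ *ᵥ s
  have hz : (1 + K) *ᵥ z = s := by
    rw [mulVec_mulVec, mul_nonsing_inv _ (PosDef.one.add_posSemidef hK).det_pos.ne'.isUnit,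
      one_mulVec]
  have hz_le : √(z ⬝ᵥ z) ≤ matNorm (1 + K) z := by
    simpa [matNorm] using matNorm_le_matNorm (M := 1) (by simpa using hK) z
  have hsq : matNorm (1 + K) z ^ 2 ≤ matNorm (1 + K) z * √(s ⬝ᵥ s) := calc
    matNorm (1 + K) z ^ 2 = z ⬝ᵥ s := by
      have hnonneg := (PosDef.one.add_posSemidef hK).posSemidef.dotProduct_mulVec_nonneg z
      rw [star_trivial] at hnonneg
      rw [matNorm, Real.sq_sqrt hnonneg, dotProduct_comm, hz, dotProduct_comm]
    _ ≤ √(z ⬝ᵥ z) * √(s ⬝ᵥ s) := by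
      simpa [dotProduct, sq] using Real.sum_mul_le_sqrt_mul_sqrt Finset.univ z s
    _ ≤ matNorm (1 + K) z * √(s ⬝ᵥ s) := by gcongr
  nlinarith [Real.sqrt_nonneg (s ⬝ᵥ s), Real.sqrt_nonneg (z ⬝ᵥ (1 + K) *ᵥ z)]

lemma dotProduct_self_le_card {s : ι → ℝ} (hs : ∀ i, |s i| ≤ 1) : s ⬝ᵥ s ≤ Fintype.card ι := by
  calc s ⬝ᵥ s = ∑ i, |s i| ^ 2 := by simp [dotProduct, sq]
    _ ≤ ∑ _i : ι, (1 : ℝ) := by gcongr with i; exact pow_le_one₀ (abs_nonneg _) (hs i)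
    _ = Fintype.card ι := by simp

lemma sqrt_dotProduct_self_le_card {s : ι → ℝ} (hs : ∀ i, |s i| ≤ 1) :
    √(s ⬝ᵥ s) ≤ Fintype.card ι := by
  have hcard : (Fintype.card ι : ℝ) ≤ (Fintype.card ι : ℝ) ^ 2 := by
    exact_mod_cast Nat.le_self_pow two_ne_zero _
  rw [Real.sqrt_le_left (Nat.cast_nonneg _)]
  exact (dotProduct_self_le_card hs).trans hcard

variable [DecidableEq ι]

noncomputable def signedLaplacian (W : Matrix ι ι ℝ) : Matrix ι ι ℝ :=
  diagonal (fun i => ∑ j, |W i j|) - W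

lemma signedLaplacian_add {W V : Matrix ι ι ℝ} (h : ∀ i j, |W i j + V i j| = |W i j| + |V i j|) :
    signedLaplacian (W + V) = signedLaplacian W + signedLaplacian V := by
  ext i j
  simp only [signedLaplacian, Matrix.add_apply, Matrix.sub_apply, h, Finset.sum_add_distrib,
    ← diagonal_add]
  ring

lemma signedLaplacian_map_max_add_signedLaplacian_map_min (W : Matrix ι ι ℝ) :
    signedLaplacian (W.map (max · 0)) + signedLaplacian (W.map (min · 0)) = signedLaplacian W := by
  rw [← signedLaplacian_add fun i j => ?_]
  · congr 1
    ext i j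
    rcases le_total (W i j) 0 with h | h <;> simp [h]
  · rw [abs_add_eq_add_abs_iff]
    rcases le_total (W i j) 0 with h | h <;> simp [h]

lemma dotProduct_signedLaplacian_mulVec (W : Matrix ι ι ℝ) (x : ι → ℝ) :
    x ⬝ᵥ signedLaplacian W *ᵥ x = ∑ i, ∑ j, (|W i j| * x i ^ 2 - W i j * x i * x j) := by
  rw [signedLaplacian, sub_mulVec, dotProduct_sub]
  simp only [dotProduct, mulVec_diagonal]
  simp only [mulVec, dotProduct, Finset.mul_sum, Finset.sum_mul, ← Finset.sum_sub_distrib]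
  refine Finset.sum_congr rfl fun i _ => Finset.sum_congr rfl fun j _ => by ring

/- Symmetrising the quadratic form gives `2 xᵀ L x = ∑ᵢⱼ (|Wᵢⱼ| (xᵢ² + xⱼ²) - 2 Wᵢⱼ xᵢ xⱼ)`,
and each summand is at least `|Wᵢⱼ| (|xᵢ| - |xⱼ|)² ≥ 0`. -/
lemma signedLaplacian_posSemidef {W : Matrix ι ι ℝ} (hW : W.IsSymm) :
    (signedLaplacian W).PosSemidef := by
  refine .of_dotProduct_mulVec_nonneg ?_ fun x => ?_
  · exact (isHermitian_diagonal _).sub (isHermitian_iff_isSymm.mpr hW)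
  rw [star_trivial, dotProduct_signedLaplacian_mulVec]
  have hswap : ∑ i, ∑ j, (|W i j| * x i ^ 2 - W i j * x i * x j) =
      ∑ i, ∑ j, (|W i j| * x j ^ 2 - W i j * x i * x j) := by
    rw [Finset.sum_comm]
    refine Finset.sum_congr rfl fun i _ => Finset.sum_congr rfl fun j _ => ?_
    rw [hW.apply i j]; ring
  have hterm : ∀ i j, 0 ≤ |W i j| * x i ^ 2 - W i j * x i * x j +
      (|W i j| * x j ^ 2 - W i j * x i * x j) := fun i j => by
    have hcross : W i j * x i * x j ≤ |W i j| * (|x i| * |x j|) := by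
      rw [← abs_mul, ← abs_mul, ← mul_assoc]; exact le_abs_self _
    have hamgm : 2 * (|x i| * |x j|) ≤ x i ^ 2 + x j ^ 2 := by
      nlinarith [sq_nonneg (|x i| - |x j|), sq_abs (x i), sq_abs (x j)]
    nlinarith [mul_le_mul_of_nonneg_left hamgm (abs_nonneg (W i j))]
  have hsum := Finset.sum_nonneg fun i (_ : i ∈ Finset.univ) =>
    Finset.sum_nonneg fun j (_ : j ∈ Finset.univ) => hterm i j
  simp only [Finset.sum_add_distrib, ← hswap] at hsum
  linarith

end

theorem stmt_16_general (n : ℕ) (A : Matrix (Fin n) (Fin n) ℝ)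
    (hAsymm : A.IsSymm)
    (Apos Aneg D Dp Dm L Lp Lm : Matrix (Fin n) (Fin n) ℝ)
    (hApos : ∀ i j, Apos i j = max (A i j) 0)
    (hAneg : ∀ i j, Aneg i j = min (A i j) 0)
    (hD : D = Matrix.diagonal fun i => ∑ j, |A i j|)
    (hDp : Dp = Matrix.diagonal fun i => ∑ j, Apos i j)
    (hDm : Dm = Matrix.diagonal fun i => ∑ j, |Aneg i j|)
    (hL : L = D - A) (hLp : Lp = Dp - Apos) (hLm : Lm = Dm - Aneg)
    (s : Fin n → ℝ) (hs : ∀ i, s i ∈ Set.Icc (-1 : ℝ) 1)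
    (δ : ℝ) (hδ : 0 < δ)
    (z : Fin n → ℝ) (hz : z = (1 + L)⁻¹ *ᵥ s)
    (q : Fin n → ℝ)
    (hq : matNorm (1 + L) (q - z) ≤ δ * matNorm (1 + L) z) :
    |Real.sqrt (q ⬝ᵥ Lp *ᵥ q) - Real.sqrt (z ⬝ᵥ Lp *ᵥ z)| ≤
      Real.sqrt 2 * δ * n ∧
    |Real.sqrt (q ⬝ᵥ Lm *ᵥ q) - Real.sqrt (z ⬝ᵥ Lm *ᵥ z)| ≤
      Real.sqrt 2 * δ * n := by
  have hApos_eq : Apos = A.map (max · 0) := ext hApos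
  have hAneg_eq : Aneg = A.map (min · 0) := ext hAneg
  have hLp_eq : Lp = signedLaplacian Apos := by
    have habs : ∀ i j, |Apos i j| = Apos i j :=
      fun i j => abs_of_nonneg (hApos i j ▸ le_max_right _ _)
    simp only [hLp, hDp, signedLaplacian, habs]
  have hLm_eq : Lm = signedLaplacian Aneg := by rw [hLm, hDm, signedLaplacian]
  have hL_eq : L = Lp + Lm := by
    rw [hLp_eq, hLm_eq, hApos_eq, hAneg_eq, signedLaplacian_map_max_add_signedLaplacian_map_min,
      hL, hD, signedLaplacian]
  have hLp_psd : Lp.PosSemidef := hLp_eq ▸ signedLaplacian_posSemidef (hApos_eq ▸ hAsymm.map _)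
  have hLm_psd : Lm.PosSemidef := hLm_eq ▸ signedLaplacian_posSemidef (hAneg_eq ▸ hAsymm.map _)
  have hdist : matNorm (1 + L) (q - z) ≤ √2 * δ * n := calc
    matNorm (1 + L) (q - z) ≤ δ * matNorm (1 + L) z := hq
    _ ≤ δ * (√2 * n) := by
      gcongr
      calc matNorm (1 + L) z ≤ √(s ⬝ᵥ s) :=
            hz ▸ matNorm_one_add_inv_mulVec_le (hL_eq ▸ hLp_psd.add hLm_psd) s
        _ ≤ n := by simpa using sqrt_dotProduct_self_le_card fun i => abs_le.mpr (hs i)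
        _ ≤ √2 * n := le_mul_of_one_le_left n.cast_nonneg (Real.one_le_sqrt.mpr one_le_two)
    _ = √2 * δ * n := by ring
  have hLp_le : (1 + L - Lp).PosSemidef := by
    rw [hL_eq, add_sub_assoc, add_sub_cancel_left]; exact PosSemidef.one.add hLm_psd
  have hLm_le : (1 + L - Lm).PosSemidef := by
    rw [hL_eq, add_sub_assoc, add_sub_cancel_right]; exact PosSemidef.one.add hLp_psd
  exact ⟨(abs_matNorm_sub_matNorm_le_of_le hLp_psd hLp_le q z).trans hdist,
    (abs_matNorm_sub_matNorm_le_of_le hLm_psd hLm_le q z).trans hdist⟩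

theorem stmt_16 (n : ℕ) (hn : 1 ≤ n) (A : Matrix (Fin n) (Fin n) ℝ)
    (hAsymm : A.IsSymm) (hAdiag : ∀ i, A i i = 0)
    (hAval : ∀ i j, A i j = -1 ∨ A i j = 0 ∨ A i j = 1)
    (Apos Aneg D Dp Dm L Lp Lm : Matrix (Fin n) (Fin n) ℝ)
    (hApos : ∀ i j, Apos i j = max (A i j) 0)
    (hAneg : ∀ i j, Aneg i j = min (A i j) 0)
    (hD : D = Matrix.diagonal fun i => ∑ j, |A i j|)
    (hDp : Dp = Matrix.diagonal fun i => ∑ j, Apos i j)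
    (hDm : Dm = Matrix.diagonal fun i => ∑ j, |Aneg i j|)
    (hL : L = D - A) (hLp : Lp = Dp - Apos) (hLm : Lm = Dm - Aneg)
    (s : Fin n → ℝ) (hs : ∀ i, s i ∈ Set.Icc (-1 : ℝ) 1)
    (δ : ℝ) (hδ : 0 < δ)
    (z : Fin n → ℝ) (hz : z = (1 + L)⁻¹ *ᵥ s)
    (q : Fin n → ℝ)
    (hq : matNorm (1 + L) (q - z) ≤ δ * matNorm (1 + L) z) :
    |Real.sqrt (q ⬝ᵥ Lp *ᵥ q) - Real.sqrt (z ⬝ᵥ Lp *ᵥ z)| ≤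
      Real.sqrt 2 * δ * n ∧
    |Real.sqrt (q ⬝ᵥ Lm *ᵥ q) - Real.sqrt (z ⬝ᵥ Lm *ᵥ z)| ≤
      Real.sqrt 2 * δ * n :=
  stmt_16_general n A hAsymm Apos Aneg D Dp Dm L Lp Lm hApos hAneg hD hDp hDm hL hLp hLm s hs δ hδ z
    hz q hq
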